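/- arXiv:1410.3314 — 2 statements merged into one kernel-verified Lean document; each statement's English description precedes it below -/
import Mathlib

section
/- Let h(x) = ⌊(v·x + b)/w⌋ where v ∈ ℝ^d is fixed, w > 0, and b is uniformly distributed on [0,w]. Then for any x, x' ∈ ℝ^d with c = |v·(x − x')| the probability over b that h(x) ≠ h(x') equals min(c/w, 1). -/
/-!
Shifting the offset `b` by a multiple of `w` shifts both hash values by the same integer, so the
set of separating offsets is `w`-periodic and its measure in the window `[0, w]` equals its
measure in any window of length `w`. In the window `[-q, w - q)` the hash of `q` is identically
`0`, and for `q ≤ p` the hash of `p` is nonzero exactly on `[max (-q) (w - p), w - q)`, an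
interval of length `min (p - q) w`.
-/

open MeasureTheory Set

def floorSeparatingSet (p q w : ℝ) : Set ℝ := {b | ⌊(p + b) / w⌋ ≠ ⌊(q + b) / w⌋}

lemma floorSeparatingSet_comm (p q w : ℝ) :
    floorSeparatingSet p q w = floorSeparatingSet q p w := by
  ext b
  exact ne_comm

lemma measurableSet_floorSeparatingSet (p q w : ℝ) :
    MeasurableSet (floorSeparatingSet p q w) :=
  (measurableSet_eq_fun (by fun_prop) (by fun_prop)).compl

lemma floor_add_zsmul_add_div (a b : ℝ) {w : ℝ} (hw : w ≠ 0) (k : ℤ) :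
    ⌊(a + (k • w + b)) / w⌋ = ⌊(a + b) / w⌋ + k := by
  rw [← Int.floor_add_intCast]
  congr 1
  field_simp
  simp only [zsmul_eq_mul]
  ring

lemma vadd_preimage_floorSeparatingSet (p q : ℝ) {w : ℝ} (hw : w ≠ 0)
    (g : AddSubgroup.zmultiples w) :
    (g +ᵥ ·) ⁻¹' floorSeparatingSet p q w = floorSeparatingSet p q w := by
  obtain ⟨_, k, rfl⟩ := g
  ext b
  change ⌊(p + (k • w + b)) / w⌋ ≠ ⌊(q + (k • w + b)) / w⌋ ↔ _
  simp only [floor_add_zsmul_add_div _ _ hw, ne_eq, add_left_inj]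
  rfl

lemma volume_Icc_inter_floorSeparatingSet_eq_Ico (p q : ℝ) {w : ℝ} (hw : 0 < w) (t : ℝ) :
    volume (Icc 0 w ∩ floorSeparatingSet p q w)
      = volume (Ico t (t + w) ∩ floorSeparatingSet p q w) := by
  have hdomain := (isAddFundamentalDomain_Ioc hw 0).measure_set_eq
    (isAddFundamentalDomain_Ioc hw t) (measurableSet_floorSeparatingSet p q w)
    (vadd_preimage_floorSeparatingSet p q hw.ne')
  rw [inter_comm, zero_add] at hdomain
  calc volume (Icc 0 w ∩ floorSeparatingSet p q w)
      = volume (Ioc 0 w ∩ floorSeparatingSet p q w) :=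
        measure_congr (Ioc_ae_eq_Icc.symm.inter (ae_eq_refl _))
    _ = volume (Ioc t (t + w) ∩ floorSeparatingSet p q w) := by rw [hdomain, inter_comm]
    _ = volume (Ico t (t + w) ∩ floorSeparatingSet p q w) :=
        measure_congr (Ico_ae_eq_Ioc.symm.inter (ae_eq_refl _))

lemma floor_add_div_eq_zero_iff (a b : ℝ) {w : ℝ} (hw : 0 < w) :
    ⌊(a + b) / w⌋ = 0 ↔ -a ≤ b ∧ b < -a + w := by
  rw [Int.floor_eq_zero_iff, mem_Ico, le_div_iff₀ hw, div_lt_iff₀ hw, zero_mul, one_mul]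
  constructor <;> rintro ⟨h1, h2⟩ <;> constructor <;> linarith

lemma Ico_inter_floorSeparatingSet {p q w : ℝ} (hw : 0 < w) (hqp : q ≤ p) :
    Ico (-q) (-q + w) ∩ floorSeparatingSet p q w = Ico (max (-q) (-p + w)) (-q + w) := by
  ext b
  simp only [mem_inter_iff, mem_Ico, floorSeparatingSet, mem_ofPred_eq, max_le_iff]
  have hq := floor_add_div_eq_zero_iff q b hw
  have hp := floor_add_div_eq_zero_iff p b hw
  constructor
  · rintro ⟨hb, h⟩
    rw [hq.2 hb, ne_eq, hp, not_and, not_lt] at h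
    exact ⟨⟨hb.1, h (by linarith [hb.1])⟩, hb.2⟩
  · rintro ⟨⟨h1, h2⟩, h3⟩
    rw [hq.2 ⟨h1, h3⟩, ne_eq, hp]
    exact ⟨⟨h1, h3⟩, fun h => by linarith [h.2]⟩

lemma measureReal_Icc_inter_floorSeparatingSet_of_le {p q w : ℝ} (hw : 0 < w) (hqp : q ≤ p) :
    volume.real (Icc 0 w ∩ floorSeparatingSet p q w) = min (p - q) w := by
  rw [measureReal_def, volume_Icc_inter_floorSeparatingSet_eq_Ico p q hw (-q),
    Ico_inter_floorSeparatingSet hw hqp, Real.volume_Ico, ENNReal.toReal_ofReal]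
  · rw [sub_sup, min_comm]
    congr 1 <;> ring
  · simp only [sub_nonneg, max_le_iff]
    constructor <;> linarith

lemma measureReal_Icc_inter_floorSeparatingSet (p q : ℝ) {w : ℝ} (hw : 0 < w) :
    volume.real (Icc 0 w ∩ floorSeparatingSet p q w) = min |p - q| w := by
  rcases le_total q p with hqp | hpq
  · rw [measureReal_Icc_inter_floorSeparatingSet_of_le hw hqp, abs_of_nonneg (sub_nonneg.2 hqp)]
  · rw [floorSeparatingSet_comm, measureReal_Icc_inter_floorSeparatingSet_of_le hw hpq,
      abs_sub_comm, abs_of_nonneg (sub_nonneg.2 hpq)]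

/-- For the hash `h_b(x) = ⌊(v·x + b)/w⌋` with fixed `v ∈ ℝ^d`, `w > 0`, and `b`
uniformly distributed on `[0,w]`, the probability (over `b`) that `h_b(x) ≠ h_b(x')`
equals `min(c/w, 1)`, where `c = |v·(x − x')|`. -/
theorem lsh_floor_hash_separation_probability
    (d : ℕ) (v : Fin d → ℝ) (w : ℝ) (hw : 0 < w) (x x' : Fin d → ℝ)
    (c : ℝ) (hc : c = |∑ i, v i * (x i - x' i)|) :
    (volume {b ∈ Set.Icc (0 : ℝ) w |
        ⌊((∑ i, v i * x i) + b) / w⌋ ≠ ⌊((∑ i, v i * x' i) + b) / w⌋}).toReal / w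
      = min (c / w) 1 := by
  have hdot : ∑ i, v i * (x i - x' i) = ∑ i, v i * x i - ∑ i, v i * x' i := by
    simp only [mul_sub, Finset.sum_sub_distrib]
  rw [← div_self hw.ne', min_div_div_right hw.le, hc, hdot,
    ← measureReal_Icc_inter_floorSeparatingSet _ _ hw]
  rfl
end

section
/- For the hash function h(x) = ⌊(v·x + b)/w⌋ with v a vector of i.i.d. standard Gaussian entries and b uniform on [0,w], the collision probability Pr(h(x) = h(x')) is a monotonically decreasing function of ‖x − x'‖_2; in particular if ‖x − x'‖_2 = 0 then the collision probability is 1. -/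
/-!
Fix `v` and put `s = v·x`, `s' = v·x'`. The offset `u = b / w` is uniform on `[0, 1]`, and
`⌊s / w + u⌋ = ⌊s' / w + u⌋` is invariant under integer shifts of `u`, so its probability can be
computed on the period interval starting at `-s / w`, where it is `(1 - |s - s'| / w)⁺`.
By 2-stability `s - s' = v·(x - x')` has the law of `‖x - x'‖ Z` with `Z` standard Gaussian, hence
the collision probability is `E[(1 - ‖x - x'‖ |Z| / w)⁺]`: nonincreasing in `‖x - x'‖`, and `1` at `0`.
-/

open MeasureTheory ProbabilityTheory Set

theorem floor_add_eq_floor_add_inter_Ioo {c c' : ℝ} (h : c ≤ c') :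
    {u : ℝ | ⌊c + u⌋ = ⌊c' + u⌋} ∩ Ioo (-c) (-c + 1) = Ioo (-c) (1 - c') := by
  ext u
  simp only [mem_inter_iff, mem_ofPred_eq, mem_Ioo]
  constructor
  · rintro ⟨hfl, hlo, hhi⟩
    have hc'u : ⌊c' + u⌋ = 0 := hfl ▸ Int.floor_eq_zero_iff.mpr ⟨by linarith, by linarith⟩
    exact ⟨hlo, by linarith [(Int.floor_eq_zero_iff.mp hc'u).2]⟩
  · rintro ⟨hlo, hhi⟩
    refine ⟨?_, hlo, by linarith⟩
    rw [Int.floor_eq_zero_iff.mpr ⟨by linarith, by linarith⟩,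
      Int.floor_eq_zero_iff.mpr ⟨by linarith, by linarith⟩]

theorem volume_floor_add_eq_floor_add_inter_Icc (c c' : ℝ) :
    volume ({u : ℝ | ⌊c + u⌋ = ⌊c' + u⌋} ∩ Icc 0 1) = ENNReal.ofReal (1 - |c - c'|) := by
  wlog h : c ≤ c' generalizing c c'
  · simpa only [eq_comm, abs_sub_comm] using this c' c (le_of_not_ge h)
  set A := {u : ℝ | ⌊c + u⌋ = ⌊c' + u⌋}
  have hA : MeasurableSet A := measurableSet_eq_fun (by fun_prop) (by fun_prop)
  -- `A` is invariant under integer translations, so any period interval sees the same measure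
  have hper : ∀ g : AddSubgroup.zmultiples (1 : ℝ), (g +ᵥ ·) ⁻¹' A = A := by
    rintro ⟨_, n, rfl⟩
    ext u
    simp only [A, mem_preimage, mem_ofPred_eq, AddSubgroup.vadd_def, vadd_eq_add, zsmul_one,
      ← add_assoc, add_right_comm _ (n : ℝ), Int.floor_add_intCast, add_left_inj]
  calc volume (A ∩ Icc 0 1) = volume (A ∩ Ioc 0 (0 + 1)) := by
        rw [zero_add]; exact measure_congr (ae_eq_refl A |>.inter Ioc_ae_eq_Icc.symm)
    _ = volume (A ∩ Ioc (-c) (-c + 1)) :=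
        (isAddFundamentalDomain_Ioc one_pos 0).measure_set_eq
          (isAddFundamentalDomain_Ioc one_pos (-c)) hA hper
    _ = volume (A ∩ Ioo (-c) (-c + 1)) :=
        measure_congr (ae_eq_refl A |>.inter Ioo_ae_eq_Ioc.symm)
    _ = ENNReal.ofReal (1 - |c - c'|) := by
        rw [floor_add_eq_floor_add_inter_Ioo h, Real.volume_Ioo, abs_sub_comm,
          abs_of_nonneg (sub_nonneg.mpr h)]
        ring_nf

theorem uniform_Icc_floor_add_div_eq {w : ℝ} (hw : 0 < w) (s s' : ℝ) :
    (ENNReal.ofReal w⁻¹ • volume.restrict (Icc 0 w)) {b : ℝ | ⌊(s + b) / w⌋ = ⌊(s' + b) / w⌋} =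
      ENNReal.ofReal (1 - |s - s'| / w) := by
  have hpre : {b : ℝ | ⌊(s + b) / w⌋ = ⌊(s' + b) / w⌋} ∩ Icc 0 w =
      (w⁻¹ * ·) ⁻¹' ({u : ℝ | ⌊s / w + u⌋ = ⌊s' / w + u⌋} ∩ Icc 0 1) := by
    ext b
    simp only [mem_inter_iff, mem_ofPred_eq, mem_Icc, mem_preimage, div_eq_inv_mul, mul_add]
    rw [inv_mul_le_one₀ hw, mul_nonneg_iff_of_pos_left (inv_pos.mpr hw)]
  rw [Measure.smul_apply, Measure.restrict_apply' measurableSet_Icc, hpre,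
    Real.volume_preimage_mul_left (inv_ne_zero hw.ne'), volume_floor_add_eq_floor_add_inter_Icc,
    inv_inv, abs_of_pos hw, smul_eq_mul, ← mul_assoc, ← ENNReal.ofReal_mul (inv_nonneg.mpr hw.le),
    inv_mul_cancel₀ hw.ne', ENNReal.ofReal_one, one_mul, ← sub_div, abs_div, abs_of_pos hw]

theorem map_pi_gaussianReal_sum_mul {ι : Type*} [Fintype ι] (a : ι → ℝ) :
    (Measure.pi fun _ : ι => gaussianReal 0 1).map (fun v => ∑ i, v i * a i) =
      (gaussianReal 0 1).map (‖WithLp.toLp 2 a‖ * ·) := by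
  set L : StrongDual ℝ (EuclideanSpace ℝ ι) := innerSL ℝ (WithLp.toLp 2 a)
  have hL : (fun v : ι → ℝ => ∑ i, v i * a i) = L ∘ WithLp.toLp 2 := by
    funext v; simp [L, PiLp.inner_apply]
  rw [hL, ← Measure.map_map L.continuous.measurable (by fun_prop), map_pi_eq_stdGaussian,
    IsGaussian.map_eq_gaussianReal, integral_strongDual_stdGaussian, variance_dual_stdGaussian,
    gaussianReal_map_const_mul]
  congr 1
  · simp
  · ext; simp [L, innerSL_apply_norm]

noncomputable def gaussianLSHCollisionProb (w r : ℝ) : ℝ :=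
  (∫⁻ z, ENNReal.ofReal (1 - |r * z| / w) ∂gaussianReal 0 1).toReal

theorem gaussianLSHCollisionProb_zero (w : ℝ) : gaussianLSHCollisionProb w 0 = 1 := by
  simp [gaussianLSHCollisionProb]

theorem antitoneOn_gaussianLSHCollisionProb {w : ℝ} (hw : 0 ≤ w) :
    AntitoneOn (gaussianLSHCollisionProb w) (Ici 0) := by
  intro r hr r' _ hrr'
  have hle_one : ∫⁻ z, ENNReal.ofReal (1 - |r * z| / w) ∂gaussianReal 0 1 ≤ 1 :=
    (lintegral_mono fun z => ENNReal.ofReal_le_one.mpr (by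
      have := div_nonneg (abs_nonneg (r * z)) hw; linarith)).trans_eq (by simp)
  refine ENNReal.toReal_mono (ne_top_of_le_ne_top ENNReal.one_ne_top hle_one) ?_
  gcongr ∫⁻ z, ENNReal.ofReal (1 - ?_ / w) ∂_ with z
  rw [abs_mul, abs_mul, abs_of_nonneg hr, abs_of_nonneg (hr.trans hrr')]
  exact mul_le_mul_of_nonneg_right hrr' (abs_nonneg z)

theorem pi_gaussianReal_prod_uniform_floor_eq {ι : Type*} [Fintype ι] {w : ℝ} (hw : 0 < w)
    (x x' : ι → ℝ) :
    ((Measure.pi fun _ : ι => gaussianReal 0 1).prod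
        (ENNReal.ofReal w⁻¹ • volume.restrict (Icc (0 : ℝ) w)))
      {p : (ι → ℝ) × ℝ | ⌊((∑ i, p.1 i * x i) + p.2) / w⌋ = ⌊((∑ i, p.1 i * x' i) + p.2) / w⌋} =
      ∫⁻ z, ENNReal.ofReal (1 - |‖WithLp.toLp 2 (x - x')‖ * z| / w) ∂gaussianReal 0 1 := by
  have hF : Measurable fun z : ℝ => ENNReal.ofReal (1 - |z| / w) := by fun_prop
  rw [Measure.prod_apply (measurableSet_eq_fun (by fun_prop) (by fun_prop))]
  simp only [preimage_ofPred_eq, uniform_Icc_floor_add_div_eq hw]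
  simp_rw [← Finset.sum_sub_distrib, ← mul_sub]
  rw [← lintegral_map hF (by fun_prop), map_pi_gaussianReal_sum_mul, lintegral_map hF (by fun_prop)]
  rfl

/-- For the hash `h(x) = ⌊(v·x + b)/w⌋` where `v` has i.i.d. standard Gaussian
entries and `b` is uniform on `[0,w]` (independent of `v`), the collision
probability `Pr(h(x) = h(x'))` is a monotonically decreasing function of
`‖x − x'‖₂`; in particular it equals 1 when `‖x − x'‖₂ = 0`. -/
theorem gaussian_lsh_collision_probability_antitone
    (d : ℕ) (w : ℝ) (hw : 0 < w) :
    ∃ f : ℝ → ℝ,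
      AntitoneOn f (Set.Ici 0) ∧ f 0 = 1 ∧
      ∀ x x' : Fin d → ℝ,
        (((Measure.pi fun _ : Fin d => gaussianReal 0 1).prod
            (ENNReal.ofReal w⁻¹ • volume.restrict (Set.Icc (0 : ℝ) w)))
          {p : (Fin d → ℝ) × ℝ |
            ⌊((∑ i, p.1 i * x i) + p.2) / w⌋ =
              ⌊((∑ i, p.1 i * x' i) + p.2) / w⌋}).toReal
          = f (Real.sqrt (∑ i, (x i - x' i) ^ 2)) := by
  refine ⟨gaussianLSHCollisionProb w, antitoneOn_gaussianLSHCollisionProb hw.le,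
    gaussianLSHCollisionProb_zero w, fun x x' => ?_⟩
  rw [pi_gaussianReal_prod_uniform_floor_eq hw, EuclideanSpace.norm_eq]
  simp [gaussianLSHCollisionProb]
end
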